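/- Let F₁, ..., F_k be a maximal spanning forest decomposition of G of order k, and let H = F₁ ∪ ... ∪ F_k. Then for every pair of vertices u, v: u and v are k-edge-connected in H if and only if u and v are k-edge-connected in G. -/

import Mathlib

/-!
An edge `xy` of `G` missing from `H = F₀ ∪ ⋯ ∪ F_{k-1}` was still available when each `Fᵢ`
was chosen, so by maximality `x` and `y` are joined in every one of the `k` edge-disjoint
forests `Fᵢ`; deleting fewer than `k` edges therefore cannot separate `x` from `y` in `H`.
Hence every set of fewer than `k` edges separating `u` from `v` in `H` separates them in `G`
too, and the edge version of Menger's theorem converts this cut condition into `k`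
edge-disjoint paths in `H`. The converse is immediate from `H ≤ G`.

Menger's theorem is proved with unit flows: skew-symmetric integer functions on darts bounded
by `1`, whose conservation law is stated as "the net flow out of every vertex set `R` is the
value times `[u ∈ R] - [v ∈ R]`", which makes adding the flow of a path linear. Either a
residual path raises the value, or the darts leaving the residual component of `u` all carry
flow and form a cut of the current value. A flow of value `k` is split into `k` edge-disjoint
paths by repeatedly peeling off a path along darts carrying flow.
-/

open SimpleGraph

variable {V : Type*}

def IsSpanningForest (G F : SimpleGraph V) : Prop :=
  F ≤ G ∧ F.IsAcyclic ∧ ∀ u v : V, G.Reachable u v → F.Reachable u v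

def IsMSFDecomp (G : SimpleGraph V) (k : ℕ) (F : ℕ → SimpleGraph V) : Prop :=
  ∀ i < k, IsSpanningForest (G \ ⨆ j ∈ Finset.range i, F j) (F i)

/-- There exist `m` pairwise edge-disjoint paths from `u` to `v` in `G`. -/
def EdgeDisjointPaths (G : SimpleGraph V) (u v : V) (m : ℕ) : Prop :=
  ∃ P : Fin m → G.Walk u v, (∀ j, (P j).IsPath) ∧
    ∀ j₁ j₂ : Fin m, j₁ ≠ j₂ → ∀ e ∈ (P j₁).edges, e ∉ (P j₂).edges

theorem Set.exists_disjoint_of_encard_lt {ι α : Type*} {s : ι → Set α}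
    (hs : Pairwise fun i j => Disjoint (s i) (s j)) {C : Set α} (hC : C.encard < ENat.card ι) :
    ∃ i, Disjoint (s i) C := by
  by_contra! h
  choose f hfs hfC using fun i => Set.not_disjoint_iff.1 (h i)
  have hf : Function.Injective f := fun i j hij => by
    by_contra hne
    exact Set.disjoint_left.1 (hs hne) (hfs i) (hij ▸ hfs j)
  have := hf.encard_range.trans (Set.encard_le_encard (Set.range_subset_iff.2 hfC))
  exact (this.trans_lt hC).false

theorem SimpleGraph.Reachable.of_forall_adj_reachable {G K : SimpleGraph V}
    (h : ∀ ⦃x y⦄, G.Adj x y → K.Reachable x y) {u v : V} (huv : G.Reachable u v) :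
    K.Reachable u v := by
  obtain ⟨W⟩ := huv
  induction W with
  | nil => rfl
  | cons hxy _ ih => exact (h hxy).trans ih

theorem EdgeDisjointPaths.mono {G G' : SimpleGraph V} (hle : G ≤ G') {u v : V} {m : ℕ}
    (h : EdgeDisjointPaths G u v m) : EdgeDisjointPaths G' u v m := by
  obtain ⟨P, hP, hdisj⟩ := h
  refine ⟨fun j => (P j).mapLe hle, fun j => (Walk.isPath_mapLe hle).2 (hP j), ?_⟩
  simpa only [Walk.edges_mapLe_eq_edges] using hdisj

theorem EdgeDisjointPaths.isEdgeReachable {G : SimpleGraph V} {u v : V} {k : ℕ}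
    (h : EdgeDisjointPaths G u v k) : G.IsEdgeReachable k u v := by
  intro s hs
  obtain ⟨P, -, hdisj⟩ := h
  obtain ⟨j, hj⟩ := Set.exists_disjoint_of_encard_lt (s := fun j => {e | e ∈ (P j).edges})
    (fun j₁ j₂ hne => Set.disjoint_left.2 (hdisj j₁ j₂ hne)) (C := s) (by simpa using hs)
  exact ⟨(P j).toDeleteEdges s fun e he => Set.disjoint_left.1 hj he⟩

namespace SimpleGraph

variable {H : SimpleGraph V} {u v : V}

open Classical in
noncomputable def flowAcross (R : Set V) : (H.Dart →₀ ℤ) →ₗ[ℤ] ℤ :=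
  Finsupp.linearCombination ℤ fun d => if d.fst ∈ R ∧ d.snd ∉ R then 1 else 0

theorem flowAcross_apply (R : Set V) (f : H.Dart →₀ ℤ) [DecidablePred (· ∈ R)] :
    flowAcross R f = ∑ d ∈ f.support with d.fst ∈ R ∧ d.snd ∉ R, f d := by
  classical
  simp only [flowAcross, Finsupp.linearCombination_apply, Finsupp.sum, Finset.sum_filter,
    smul_eq_mul, mul_ite, mul_one, mul_zero]

theorem flowAcross_single_sub_single_symm (R : Set V) (d : H.Dart) :
    flowAcross R (Finsupp.single d 1 - Finsupp.single d.symm 1) =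
      R.indicator 1 d.fst - R.indicator 1 d.snd := by
  simp only [flowAcross, map_sub, Finsupp.linearCombination_single, one_smul, Dart.symm_toProd,
    Prod.fst_swap, Prod.snd_swap]
  by_cases hx : d.fst ∈ R <;> by_cases hy : d.snd ∈ R <;> simp [hx, hy]

noncomputable def walkFlow {x y : V} (W : H.Walk x y) : H.Dart →₀ ℤ :=
  (W.darts.map fun d => Finsupp.single d 1 - Finsupp.single d.symm 1).sum

@[simp]
theorem walkFlow_nil {x : V} : walkFlow (Walk.nil : H.Walk x x) = 0 := rfl

@[simp]
theorem walkFlow_cons {x y z : V} (h : H.Adj x y) (W : H.Walk y z) :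
    walkFlow (Walk.cons h W) =
      Finsupp.single ⟨(x, y), h⟩ 1 - Finsupp.single (Dart.symm ⟨(x, y), h⟩) 1 + walkFlow W :=
  rfl

theorem flowAcross_walkFlow (R : Set V) {x y : V} (W : H.Walk x y) :
    flowAcross R (walkFlow W) = R.indicator 1 x - R.indicator 1 y := by
  induction W with
  | nil => simp
  | cons h W ih =>
    rw [walkFlow_cons, map_add, ih, flowAcross_single_sub_single_symm]
    ring

theorem walkFlow_apply [DecidableEq V] {x y : V} (W : H.Walk x y) (d : H.Dart) :
    walkFlow W d = W.darts.count d - W.darts.count d.symm := by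
  induction W with
  | nil => simp
  | cons h W ih =>
    simp only [walkFlow_cons, Finsupp.add_apply, Finsupp.sub_apply, Finsupp.single_apply, ih,
      Walk.darts_cons, List.count_cons, beq_iff_eq, Dart.symm_involutive.eq_iff]
    split_ifs <;> push_cast <;> ring

theorem walkFlow_symm {x y : V} (W : H.Walk x y) (d : H.Dart) :
    walkFlow W d.symm = -walkFlow W d := by
  classical
  rw [walkFlow_apply, walkFlow_apply, Dart.symm_symm]
  ring

theorem exists_walk_forall_darts_or_exists_separating_set (p : H.Dart → Prop) (u v : V) :
    (∃ W : H.Walk u v, ∀ d ∈ W.darts, p d) ∨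
      ∃ R : Set V, u ∈ R ∧ v ∉ R ∧ ∀ d : H.Dart, d.fst ∈ R → d.snd ∉ R → ¬p d := by
  set R : Set V := {x | ∃ W : H.Walk u x, ∀ d ∈ W.darts, p d}
  by_cases hv : v ∈ R
  · exact Or.inl hv
  refine Or.inr ⟨R, ⟨Walk.nil, by simp⟩, hv, fun d ⟨W, hW⟩ hd hpd => hd ?_⟩
  refine ⟨W.concat d.adj, fun d' hd' => ?_⟩
  rw [Walk.darts_concat, List.concat_eq_append, List.mem_append, List.mem_singleton] at hd'
  rcases hd' with hd' | rfl
  · exact hW d' hd'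
  · exact hpd

structure IsUnitFlow (H : SimpleGraph V) (u v : V) (n : ℕ) (f : H.Dart →₀ ℤ) : Prop where
  map_symm : ∀ d, f d.symm = -f d
  le_one : ∀ d, f d ≤ 1
  flowAcross_eq : ∀ R : Set V, flowAcross R f = n * (R.indicator 1 u - R.indicator 1 v)

theorem isUnitFlow_zero : IsUnitFlow H u v 0 0 :=
  ⟨by simp, by simp, by simp⟩

namespace IsUnitFlow

variable {n : ℕ} {f : H.Dart →₀ ℤ} {W : H.Walk u v}

theorem add_walkFlow (hf : IsUnitFlow H u v n f) (hW : W.darts.Nodup)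
    (hres : ∀ d ∈ W.darts, f d ≤ 0) : IsUnitFlow H u v (n + 1) (f + walkFlow W) where
  map_symm d := by simp only [Finsupp.add_apply, hf.map_symm, walkFlow_symm]; ring
  le_one d := by
    classical
    have hcount := List.nodup_iff_count_le_one.1 hW d
    rw [Finsupp.add_apply, walkFlow_apply]
    by_cases hd : d ∈ W.darts
    · have := hres d hd
      omega
    · have := hf.le_one d
      rw [List.count_eq_zero_of_not_mem hd]
      omega
  flowAcross_eq R := by
    rw [map_add, hf.flowAcross_eq, flowAcross_walkFlow]
    push_cast
    ring

theorem sub_walkFlow (hf : IsUnitFlow H u v (n + 1) f) (hW : W.darts.Nodup)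
    (hpos : ∀ d ∈ W.darts, f d = 1) : IsUnitFlow H u v n (f - walkFlow W) where
  map_symm d := by simp only [Finsupp.sub_apply, hf.map_symm, walkFlow_symm]; ring
  le_one d := by
    classical
    have hcount := List.nodup_iff_count_le_one.1 hW d.symm
    rw [Finsupp.sub_apply, walkFlow_apply]
    by_cases hd : d.symm ∈ W.darts
    · have := hf.map_symm d
      have := hpos _ hd
      omega
    · have := hf.le_one d
      rw [List.count_eq_zero_of_not_mem hd]
      omega
  flowAcross_eq R := by
    rw [map_sub, hf.flowAcross_eq, flowAcross_walkFlow]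
    push_cast
    ring

theorem eq_one_and_edge_notMem_of_sub_walkFlow_eq_one (hf : IsUnitFlow H u v n f)
    (hW : W.darts.Nodup) (hpos : ∀ d ∈ W.darts, f d = 1) {d : H.Dart}
    (hd : (f - walkFlow W) d = 1) : f d = 1 ∧ d.edge ∉ W.edges := by
  classical
  rw [Finsupp.sub_apply, walkFlow_apply] at hd
  have hcount := List.nodup_iff_count_le_one.1 hW
  have hsymm := hf.map_symm d
  have hd_notMem : d ∉ W.darts := by
    intro hmem
    have h1 := hpos d hmem
    have hs : d.symm ∉ W.darts := fun hs => by have := hpos _ hs; omega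
    rw [List.count_eq_one_of_mem hW hmem, List.count_eq_zero_of_not_mem hs] at hd
    omega
  have hs_notMem : d.symm ∉ W.darts := by
    intro hs
    have h1 := hpos _ hs
    have := hcount d.symm
    omega
  rw [List.count_eq_zero_of_not_mem hd_notMem, List.count_eq_zero_of_not_mem hs_notMem] at hd
  refine ⟨by simpa using hd, fun he => ?_⟩
  obtain ⟨d', hd', hd'e⟩ := List.mem_map.1 he
  rcases (dart_edge_eq_iff d' d).1 hd'e with rfl | rfl
  exacts [hd_notMem hd', hs_notMem hd']

theorem exists_walk_forall_darts_pos (hf : IsUnitFlow H u v (n + 1) f) :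
    ∃ W : H.Walk u v, ∀ d ∈ W.darts, 0 < f d := by
  classical
  refine (exists_walk_forall_darts_or_exists_separating_set _ u v).resolve_right ?_
  rintro ⟨R, hu, hv, hR⟩
  have hflow := hf.flowAcross_eq R
  rw [flowAcross_apply, Set.indicator_of_mem hu, Set.indicator_of_notMem hv] at hflow
  have : ∑ d ∈ f.support with d.fst ∈ R ∧ d.snd ∉ R, f d ≤ 0 :=
    Finset.sum_nonpos fun d hd => not_lt.1 <| hR d (Finset.mem_filter.1 hd).2.1
      (Finset.mem_filter.1 hd).2.2
  simp only [Pi.one_apply, sub_zero, mul_one] at hflow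
  omega

theorem exists_walk_forall_darts_nonpos (hf : IsUnitFlow H u v n f)
    (h : H.IsEdgeReachable (n + 1) u v) : ∃ W : H.Walk u v, ∀ d ∈ W.darts, f d ≤ 0 := by
  classical
  refine (exists_walk_forall_darts_or_exists_separating_set _ u v).resolve_right ?_
  rintro ⟨R, hu, hv, hR⟩
  set S := {d ∈ f.support | d.fst ∈ R ∧ d.snd ∉ R}
  have hS : ∀ d : H.Dart, d.fst ∈ R → d.snd ∉ R → f d = 1 := fun d h₁ h₂ =>
    le_antisymm (hf.le_one d) (by have := hR d h₁ h₂; omega)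
  have hcard : S.card = n := by
    have hflow := hf.flowAcross_eq R
    rw [flowAcross_apply, Set.indicator_of_mem hu, Set.indicator_of_notMem hv,
      Finset.sum_congr rfl fun d hd => hS d (Finset.mem_filter.1 hd).2.1
        (Finset.mem_filter.1 hd).2.2] at hflow
    simpa using hflow
  have hC : ((S.image Dart.edge : Finset (Sym2 V)) : Set (Sym2 V)).encard < n + 1 := by
    rw [Set.encard_coe_eq_coe_finsetCard]
    exact_mod_cast hcard ▸ Nat.lt_succ_of_le Finset.card_image_le
  obtain ⟨W⟩ := h hC
  obtain ⟨d, -, hd₁, hd₂⟩ := W.exists_boundary_dart R hu hv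
  have hadj := deleteEdges_adj.1 d.adj
  refine hadj.2 (Finset.mem_coe.2 (Finset.mem_image.2 ⟨⟨d.toProd, hadj.1⟩, ?_, rfl⟩))
  have := hS ⟨d.toProd, hadj.1⟩ hd₁ hd₂
  exact Finset.mem_filter.2 ⟨Finsupp.mem_support_iff.2 (by omega), hd₁, hd₂⟩

end IsUnitFlow

end SimpleGraph

namespace SimpleGraph

variable {H : SimpleGraph V} {u v : V} {k : ℕ}

theorem IsUnitFlow.exists_paths {n : ℕ} {f : H.Dart →₀ ℤ} (hf : IsUnitFlow H u v n f) :
    ∃ P : Fin n → H.Walk u v, (∀ j, (P j).IsPath) ∧ (∀ j, ∀ d ∈ (P j).darts, f d = 1) ∧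
      ∀ j₁ j₂ : Fin n, j₁ ≠ j₂ → ∀ e ∈ (P j₁).edges, e ∉ (P j₂).edges := by
  induction n generalizing f with
  | zero => exact ⟨Fin.elim0, fun j => j.elim0, fun j => j.elim0, fun j => j.elim0⟩
  | succ n ih =>
    classical
    obtain ⟨W₀, hW₀⟩ := hf.exists_walk_forall_darts_pos
    set W := W₀.bypass
    have hWpath : W.IsPath := W₀.bypass_isPath
    have hWnodup : W.darts.Nodup := Walk.darts_nodup_of_support_nodup hWpath.support_nodup
    have hW : ∀ d ∈ W.darts, f d = 1 := fun d hd =>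
      le_antisymm (hf.le_one d) (hW₀ d (W₀.darts_bypass_subset_darts hd))
    obtain ⟨P, hPpath, hP, hPdisj⟩ := ih (hf.sub_walkFlow hWnodup hW)
    have hPW : ∀ j, ∀ e ∈ (P j).edges, e ∉ W.edges := fun j e he => by
      obtain ⟨d, hd, rfl⟩ := List.mem_map.1 he
      exact (hf.eq_one_and_edge_notMem_of_sub_walkFlow_eq_one hWnodup hW (hP j d hd)).2
    refine ⟨Fin.cons W P, Fin.cases hWpath hPpath, Fin.cases hW fun j d hd =>
      (hf.eq_one_and_edge_notMem_of_sub_walkFlow_eq_one hWnodup hW (hP j d hd)).1, ?_⟩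
    intro j₁ j₂ hne e he₁ he₂
    cases j₁ using Fin.cases <;> cases j₂ using Fin.cases
    · exact hne rfl
    · exact hPW _ e he₂ he₁
    · exact hPW _ e he₁ he₂
    · exact hPdisj _ _ (fun h => hne (congrArg Fin.succ h)) e he₁ he₂

theorem IsEdgeReachable.exists_isUnitFlow (h : H.IsEdgeReachable k u v) {n : ℕ} (hn : n ≤ k) :
    ∃ f, IsUnitFlow H u v n f := by
  induction n with
  | zero => exact ⟨0, isUnitFlow_zero⟩
  | succ n ih =>
    classical
    obtain ⟨f, hf⟩ := ih (by omega)
    obtain ⟨W, hW⟩ := hf.exists_walk_forall_darts_nonpos (h.anti hn)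
    exact ⟨_, hf.add_walkFlow
      (Walk.darts_nodup_of_support_nodup W.bypass_isPath.support_nodup)
      fun d hd => hW d (W.darts_bypass_subset_darts hd)⟩

theorem IsEdgeReachable.edgeDisjointPaths (h : H.IsEdgeReachable k u v) :
    EdgeDisjointPaths H u v k := by
  obtain ⟨f, hf⟩ := h.exists_isUnitFlow le_rfl
  obtain ⟨P, hP, -, hdisj⟩ := hf.exists_paths
  exact ⟨P, hP, hdisj⟩

end SimpleGraph

namespace IsMSFDecomp

variable {G : SimpleGraph V} {k : ℕ} {F : ℕ → SimpleGraph V}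

theorem le (hF : IsMSFDecomp G k F) {i : ℕ} (hi : i < k) : F i ≤ G :=
  (hF i hi).1.trans sdiff_le

theorem iSup_le (hF : IsMSFDecomp G k F) : ⨆ i ∈ Finset.range k, F i ≤ G :=
  iSup₂_le fun _ hi => hF.le (Finset.mem_range.1 hi)

theorem disjoint (hF : IsMSFDecomp G k F) {i j : ℕ} (hij : i < j) (hj : j < k) :
    Disjoint (F i) (F j) :=
  (disjoint_sdiff_self_left.mono (hF j hj).1
    (le_iSup₂ (f := fun l (_ : l ∈ Finset.range j) => F l) i (Finset.mem_range.2 hij))).symm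

theorem pairwise_disjoint_edgeSet (hF : IsMSFDecomp G k F) :
    Pairwise fun i j : Fin k => Disjoint (F i).edgeSet (F j).edgeSet := by
  intro i j hne
  rw [disjoint_edgeSet]
  rcases lt_or_gt_of_ne (Fin.val_ne_of_ne hne) with h | h
  exacts [hF.disjoint h j.2, (hF.disjoint h i.2).symm]

theorem reachable_of_adj (hF : IsMSFDecomp G k F) {x y : V} (hxy : G.Adj x y)
    (hH : ¬(⨆ i ∈ Finset.range k, F i).Adj x y) {i : ℕ} (hi : i < k) : (F i).Reachable x y := by
  refine (hF i hi).2.2 x y (Adj.reachable ((sdiff_adj _ _ _ _).2 ⟨hxy, fun h => hH ?_⟩))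
  simp only [iSup_adj, Finset.mem_range] at h ⊢
  obtain ⟨j, hj, hFj⟩ := h
  exact ⟨j, hj.trans hi, hFj⟩

theorem isEdgeReachable (hF : IsMSFDecomp G k F) {u v : V} (h : G.IsEdgeReachable k u v) :
    (⨆ i ∈ Finset.range k, F i).IsEdgeReachable k u v := by
  intro s hs
  refine (h hs).of_forall_adj_reachable fun x y hxy => ?_
  rw [deleteEdges_adj] at hxy
  by_cases hH : (⨆ i ∈ Finset.range k, F i).Adj x y
  · exact (deleteEdges_adj.2 ⟨hH, hxy.2⟩).reachable
  obtain ⟨i, hi⟩ := Set.exists_disjoint_of_encard_lt hF.pairwise_disjoint_edgeSet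
    (C := s) (by simpa using hs)
  refine (hF.reachable_of_adj hxy.1 hH i.2).mono ?_
  rw [← deleteEdges_eq_self.2 hi]
  exact deleteEdges_mono (le_iSup₂ (f := fun l (_ : l ∈ Finset.range k) => F l) i
    (Finset.mem_range.2 i.2))

end IsMSFDecomp

/-- The union of the forests of a maximal spanning forest decomposition of order `k`
is a `k`-certificate: two vertices are `k`-edge-connected in the union iff they are
`k`-edge-connected in `G`. -/
theorem msfd_k_certificate (G : SimpleGraph V) (k : ℕ) (F : ℕ → SimpleGraph V)
    (hF : IsMSFDecomp G k F) (u v : V) :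
    EdgeDisjointPaths (⨆ i ∈ Finset.range k, F i) u v k ↔ EdgeDisjointPaths G u v k :=
  ⟨fun h => h.mono hF.iSup_le,
    fun h => (hF.isEdgeReachable h.isEdgeReachable).edgeDisjointPaths⟩
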